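/- arXiv:2502.17983 — 5 statements merged into one kernel-verified Lean document; each statement's English description precedes it below -/
import Mathlib

section
/- If {ρ_n} is a pointwise nondecreasing sequence of nonnegative cost functions on S × S converging pointwise to ρ (with S finite), then W₁(P,Q;ρ_n) converges to W₁(P,Q;ρ) and moreover sup_n W₁(P,Q;ρ_n) = W₁(P,Q;ρ), for any probability distributions P, Q on S. -/
open Finset Filter

variable {S A : Type*}

/-- A coupling of two distributions on a finite set: nonnegative matrix with
row marginals `P` and column marginals `Q`. -/
def IsCoupling [Fintype S] (P Q : S → ℝ) (lam : S → S → ℝ) : Prop :=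
  (∀ i j, 0 ≤ lam i j) ∧ (∀ i, ∑ j, lam i j = P i) ∧ (∀ j, ∑ i, lam i j = Q j)

/-- The 1-Wasserstein distance on a finite set with cost function `d`:
the minimal transport cost over all couplings of `P` and `Q`. -/
noncomputable def W1 [Fintype S] (P Q : S → ℝ) (d : S → S → ℝ) : ℝ :=
  sInf {c : ℝ | ∃ lam, IsCoupling P Q lam ∧ c = ∑ i, ∑ j, lam i j * d i j}

/-- `P` is a probability distribution on the finite set `S`. -/
def IsProbDist [Fintype S] (P : S → ℝ) : Prop := (∀ i, 0 ≤ P i) ∧ ∑ i, P i = 1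

/-- Total variation distance between two distributions on a finite set. -/
noncomputable def TVdist [Fintype S] (P Q : S → ℝ) : ℝ := (1/2) * ∑ i, |P i - Q i|

/-- The Bellman optimality operator of a finite MDP. -/
noncomputable def bellman [Fintype S] [Fintype A] [Nonempty A]
    (P : S → A → S → ℝ) (R : S → A → ℝ) (γ : ℝ) (V : S → ℝ) : S → ℝ :=
  fun s => ⨆ a : A, (R s a + γ * ∑ t, P s a t * V t)

/-- The DT-BSM operator `F` between two MDPs sharing state and action spaces. -/
noncomputable def Fop [Fintype S] [Fintype A] [Nonempty A]
    (P P' : S → A → S → ℝ) (R R' : S → A → ℝ) (γ : ℝ) (d : S → S → ℝ) : S → S → ℝ :=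
  fun i j => ⨆ a : A, (|R i a - R' j a| + γ * W1 (P i a) (P' j a) d)

section Aux

variable [Fintype S]

noncomputable def myCost (d lam : S → S → ℝ) : ℝ := ∑ i, ∑ j, lam i j * d i j

lemma myCost_nonneg {d lam : S → S → ℝ} (hd : ∀ i j, 0 ≤ d i j)
    (hl : ∀ i j, 0 ≤ lam i j) : 0 ≤ myCost d lam :=
  Finset.sum_nonneg fun i _ => Finset.sum_nonneg fun j _ =>
    mul_nonneg (hl i j) (hd i j)

lemma myCost_mono {d d' lam : S → S → ℝ} (h : ∀ i j, d i j ≤ d' i j)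
    (hl : ∀ i j, 0 ≤ lam i j) : myCost d lam ≤ myCost d' lam :=
  Finset.sum_le_sum fun i _ => Finset.sum_le_sum fun j _ =>
    mul_le_mul_of_nonneg_left (h i j) (hl i j)

lemma myCost_continuous (d : S → S → ℝ) : Continuous (myCost d) := by
  unfold myCost
  exact continuous_finset_sum _ fun i _ => continuous_finset_sum _ fun j _ =>
    (((continuous_apply j).comp (continuous_apply i) :
      Continuous fun lam : S → S → ℝ => lam i j).mul continuous_const)

lemma coupling_nonempty {P Q : S → ℝ} (hP : IsProbDist P) (hQ : IsProbDist Q) :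
    IsCoupling P Q (fun i j => P i * Q j) := by
  refine ⟨fun i j => mul_nonneg (hP.1 i) (hQ.1 j), fun i => ?_, fun j => ?_⟩
  · rw [← Finset.mul_sum, hQ.2, mul_one]
  · rw [← Finset.sum_mul, hP.2, one_mul]

lemma coupling_compact {P Q : S → ℝ} (hP : IsProbDist P) :
    IsCompact {lam : S → S → ℝ | IsCoupling P Q lam} := by
  have hK : IsCompact (Set.univ.pi fun _ : S => Set.univ.pi fun _ : S => Set.Icc (0:ℝ) 1) :=
    isCompact_univ_pi fun _ => isCompact_univ_pi fun _ => isCompact_Icc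
  refine hK.of_isClosed_subset ?_ ?_
  · have h1 : IsClosed {lam : S → S → ℝ | ∀ i j, 0 ≤ lam i j} := by
      simp only [Set.setOf_forall]
      exact isClosed_iInter fun i => isClosed_iInter fun j =>
        isClosed_le continuous_const ((continuous_apply j).comp (continuous_apply i))
    have h2 : IsClosed {lam : S → S → ℝ | ∀ i, ∑ j, lam i j = P i} := by
      simp only [Set.setOf_forall]
      exact isClosed_iInter fun i => isClosed_eq
        (continuous_finset_sum _ fun j _ => (continuous_apply j).comp (continuous_apply i))
        continuous_const
    have h3 : IsClosed {lam : S → S → ℝ | ∀ j, ∑ i, lam i j = Q j} := by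
      simp only [Set.setOf_forall]
      exact isClosed_iInter fun j => isClosed_eq
        (continuous_finset_sum _ fun i _ => (continuous_apply j).comp (continuous_apply i))
        continuous_const
    have : {lam : S → S → ℝ | IsCoupling P Q lam}
        = {lam | ∀ i j, 0 ≤ lam i j} ∩ ({lam | ∀ i, ∑ j, lam i j = P i}
          ∩ {lam | ∀ j, ∑ i, lam i j = Q j}) := by
      rfl
    rw [this]
    exact h1.inter (h2.inter h3)
  · intro lam hlam
    obtain ⟨hl0, hlP, _⟩ := hlam
    intro i _
    intro j _
    refine ⟨hl0 i j, ?_⟩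
    calc lam i j ≤ ∑ j', lam i j' :=
          Finset.single_le_sum (fun j' _ => hl0 i j') (mem_univ j)
      _ = P i := hlP i
      _ ≤ ∑ i', P i' := Finset.single_le_sum (fun i' _ => hP.1 i') (mem_univ i)
      _ = 1 := hP.2

lemma W1_isLeast {P Q : S → ℝ} (hP : IsProbDist P) (hQ : IsProbDist Q) (d : S → S → ℝ) :
    ∃ lam, IsCoupling P Q lam ∧
      IsLeast {c : ℝ | ∃ lam, IsCoupling P Q lam ∧ c = ∑ i, ∑ j, lam i j * d i j}
        (myCost d lam) := by
  obtain ⟨lam, hlam, hmin⟩ := (coupling_compact (Q := Q) hP).exists_isMinOn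
    ⟨_, coupling_nonempty hP hQ⟩ (myCost_continuous d).continuousOn
  refine ⟨lam, hlam, ⟨⟨lam, hlam, rfl⟩, ?_⟩⟩
  rintro c ⟨lam', hlam', rfl⟩
  exact hmin hlam'

lemma W1_eq_myCost {P Q : S → ℝ} (hP : IsProbDist P) (hQ : IsProbDist Q) (d : S → S → ℝ) :
    ∃ lam, IsCoupling P Q lam ∧ W1 P Q d = myCost d lam ∧
      ∀ lam', IsCoupling P Q lam' → myCost d lam ≤ myCost d lam' := by
  obtain ⟨lam, hlam, hleast⟩ := W1_isLeast hP hQ d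
  exact ⟨lam, hlam, hleast.csInf_eq, fun lam' h' => hleast.2 ⟨lam', h', rfl⟩⟩

lemma W1_le_myCost {P Q : S → ℝ} (hP : IsProbDist P) (hQ : IsProbDist Q) {d lam : S → S → ℝ}
    (hlam : IsCoupling P Q lam) : W1 P Q d ≤ myCost d lam := by
  obtain ⟨lam0, _, h0, hmin⟩ := W1_eq_myCost hP hQ d
  rw [h0]; exact hmin lam hlam

lemma W1_mono {P Q : S → ℝ} (hP : IsProbDist P) (hQ : IsProbDist Q) {d d' : S → S → ℝ}
    (h : ∀ i j, d i j ≤ d' i j) : W1 P Q d ≤ W1 P Q d' := by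
  obtain ⟨lam, hlam, h0, _⟩ := W1_eq_myCost hP hQ d'
  rw [h0]
  exact le_trans (W1_le_myCost hP hQ hlam) (myCost_mono h hlam.1)

end Aux

theorem W1_continuous_increasing_costs [Fintype S]
    (P Q : S → ℝ) (hP : IsProbDist P) (hQ : IsProbDist Q)
    (ρ : ℕ → S → S → ℝ) (ρlim : S → S → ℝ)
    (hnonneg : ∀ n i j, 0 ≤ ρ n i j)
    (hmono : ∀ n i j, ρ n i j ≤ ρ (n+1) i j)
    (htendsto : ∀ i j, Tendsto (fun n => ρ n i j) atTop (nhds (ρlim i j))) :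
    Tendsto (fun n => W1 P Q (ρ n)) atTop (nhds (W1 P Q ρlim)) ∧
      (⨆ n : ℕ, W1 P Q (ρ n)) = W1 P Q ρlim := by
  have hρmono : ∀ i j, Monotone fun n => ρ n i j :=
    fun i j => monotone_nat_of_le_succ fun n => hmono n i j
  have hle : ∀ n i j, ρ n i j ≤ ρlim i j :=
    fun n i j => (hρmono i j).ge_of_tendsto (htendsto i j) n
  have hW1le : ∀ n, W1 P Q (ρ n) ≤ W1 P Q ρlim := fun n => W1_mono hP hQ (fun i j => hle n i j)
  have hWmono : Monotone fun n => W1 P Q (ρ n) :=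
    monotone_nat_of_le_succ fun n => W1_mono hP hQ (hmono n)
  have hbdd : BddAbove (Set.range fun n => W1 P Q (ρ n)) :=
    ⟨W1 P Q ρlim, by rintro _ ⟨n, rfl⟩; exact hW1le n⟩
  have hsup_le : (⨆ n, W1 P Q (ρ n)) ≤ W1 P Q ρlim := ciSup_le hW1le
  choose lamn hlamn hWeq hminn using fun n => W1_eq_myCost hP hQ (ρ n)
  obtain ⟨lam, hlamC, φ, hφ, hconv⟩ :=
    (coupling_compact (Q := Q) hP).tendsto_subseq (fun n => hlamn n)
  have hWlim_le : W1 P Q ρlim ≤ ⨆ n, W1 P Q (ρ n) := by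
    have key : ∀ m, myCost (ρ m) lam ≤ ⨆ n, W1 P Q (ρ n) := by
      intro m
      have hconv' : Tendsto (fun k => myCost (ρ m) (lamn (φ k))) atTop
          (nhds (myCost (ρ m) lam)) :=
        ((myCost_continuous (ρ m)).tendsto lam).comp hconv
      refine le_of_tendsto hconv' ?_
      filter_upwards [eventually_ge_atTop m] with k hk
      have hk' : m ≤ φ k := le_trans hk hφ.le_apply
      calc myCost (ρ m) (lamn (φ k)) ≤ myCost (ρ (φ k)) (lamn (φ k)) :=
            myCost_mono (fun i j => hρmono i j hk') (hlamn (φ k)).1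
        _ = W1 P Q (ρ (φ k)) := (hWeq (φ k)).symm
        _ ≤ ⨆ n, W1 P Q (ρ n) := le_ciSup hbdd (φ k)
    have hcost_tendsto : Tendsto (fun m => myCost (ρ m) lam) atTop
        (nhds (myCost ρlim lam)) := by
      unfold myCost
      exact tendsto_finset_sum _ fun i _ => tendsto_finset_sum _ fun j _ =>
        tendsto_const_nhds.mul (htendsto i j)
    exact le_trans (W1_le_myCost hP hQ hlamC)
      (le_of_tendsto hcost_tendsto (Eventually.of_forall key))
  have hsup : (⨆ n, W1 P Q (ρ n)) = W1 P Q ρlim := le_antisymm hsup_le hWlim_le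
  refine ⟨?_, hsup⟩
  have := tendsto_atTop_ciSup hWmono hbdd
  rwa [hsup] at this
end

section
/- Let F be the operator on bounded cost functions d : S × S → [0, R_max/(1−γ)] defined by F(d)(s_i,s_j) = max_a { |R(s_i,a) − R'(s_j,a)| + γ W₁(P(·|s_i,a), P'(·|s_j,a); d) }, where R_max = max_{i,j,a} |R(s_i,a) − R'(s_j,a)|. Then F is a γ-contraction in the sup norm, and hence has a unique fixed point d̄ (the DT bisimulation metric). -/
/-!
Every transport cost `∑ λᵢⱼ dᵢⱼ` is an average of `d` under a probability coupling, so it is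
monotone in `d` and increases by exactly `c` when `c` is added to `d`. Both properties pass to
the infimum `W₁`, which is therefore 1-Lipschitz in `d` for the sup distance; a finite max of the
maps `d ↦ |R - R'| + γ W₁(d)` is then γ-Lipschitz. The box of costs with values in
`[0, M]`, `M = R_max / (1 - γ)`, is closed and `F`-invariant since `R_max + γ M = M`, so the Banach
fixed point of `F` lies in it.
-/

open Finset Filter

variable {S A : Type*}

namespace IsCoupling

variable [Fintype S] {P Q : S → ℝ} {lam : S → S → ℝ}

theorem sum_sum_mul_const (h : IsCoupling P Q lam) (hP : ∑ i, P i = 1) (c : ℝ) :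
    ∑ i, ∑ j, lam i j * c = c := by
  simp_rw [← sum_mul, h.2.1, hP, one_mul]

theorem sum_sum_mul_le_sum_sum_mul (h : IsCoupling P Q lam) {d d' : S → S → ℝ}
    (hd : ∀ i j, d i j ≤ d' i j) :
    ∑ i, ∑ j, lam i j * d i j ≤ ∑ i, ∑ j, lam i j * d' i j := by
  gcongr with i _ j _
  · exact h.1 i j
  · exact hd i j

end IsCoupling

theorem IsProbDist.isCoupling_mul [Fintype S] {P Q : S → ℝ} (hP : IsProbDist P)
    (hQ : IsProbDist Q) : IsCoupling P Q fun i j => P i * Q j :=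
  ⟨fun i j => mul_nonneg (hP.1 i) (hQ.1 j), fun i => by rw [← mul_sum, hQ.2, mul_one],
    fun j => by rw [← sum_mul, hP.2, one_mul]⟩

section W1

variable [Fintype S] {P Q : S → ℝ} {d d' : S → S → ℝ}

theorem W1_le_sum_sum_mul (hP : ∑ i, P i = 1) {lam : S → S → ℝ} (h : IsCoupling P Q lam)
    (d : S → S → ℝ) : W1 P Q d ≤ ∑ i, ∑ j, lam i j * d i j := by
  obtain ⟨b, hb⟩ := Finite.bddBelow_range (Function.uncurry d)
  refine csInf_le ⟨b, ?_⟩ ⟨lam, h, rfl⟩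
  rintro _ ⟨mu, hmu, rfl⟩
  calc b = ∑ i, ∑ j, mu i j * b := (hmu.sum_sum_mul_const hP b).symm
    _ ≤ _ := hmu.sum_sum_mul_le_sum_sum_mul fun i j => hb ⟨(i, j), rfl⟩

theorem le_W1 (hP : IsProbDist P) (hQ : IsProbDist Q) {c : ℝ}
    (h : ∀ lam, IsCoupling P Q lam → c ≤ ∑ i, ∑ j, lam i j * d i j) : c ≤ W1 P Q d :=
  le_csInf ⟨_, _, hP.isCoupling_mul hQ, rfl⟩ fun _ ⟨lam, hlam, hc⟩ => hc ▸ h lam hlam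

theorem W1_nonneg (hP : IsProbDist P) (hQ : IsProbDist Q) (hd : ∀ i j, 0 ≤ d i j) :
    0 ≤ W1 P Q d :=
  le_W1 hP hQ fun _ hlam => sum_nonneg fun i _ => sum_nonneg fun j _ =>
    mul_nonneg (hlam.1 i j) (hd i j)

theorem W1_le (hP : IsProbDist P) (hQ : IsProbDist Q) {M : ℝ} (hd : ∀ i j, d i j ≤ M) :
    W1 P Q d ≤ M := by
  have hPQ := hP.isCoupling_mul hQ
  calc W1 P Q d ≤ ∑ i, ∑ j, P i * Q j * d i j := W1_le_sum_sum_mul hP.2 hPQ d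
    _ ≤ ∑ i, ∑ j, P i * Q j * M := hPQ.sum_sum_mul_le_sum_sum_mul hd
    _ = M := hPQ.sum_sum_mul_const hP.2 M

theorem W1_le_W1_add (hP : IsProbDist P) (hQ : IsProbDist Q) {C : ℝ}
    (h : ∀ i j, d i j ≤ d' i j + C) : W1 P Q d ≤ W1 P Q d' + C := by
  rw [← sub_le_iff_le_add]
  refine le_W1 hP hQ fun lam hlam => sub_le_iff_le_add.2 ?_
  calc W1 P Q d ≤ ∑ i, ∑ j, lam i j * d i j := W1_le_sum_sum_mul hP.2 hlam d
    _ ≤ ∑ i, ∑ j, lam i j * (d' i j + C) := hlam.sum_sum_mul_le_sum_sum_mul h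
    _ = ∑ i, ∑ j, lam i j * d' i j + C := by
      simp only [mul_add, sum_add_distrib, hlam.sum_sum_mul_const hP.2]

theorem abs_W1_sub_W1_le (hP : IsProbDist P) (hQ : IsProbDist Q) {C : ℝ}
    (h : ∀ i j, |d i j - d' i j| ≤ C) : |W1 P Q d - W1 P Q d'| ≤ C :=
  abs_sub_le_iff.2
    ⟨sub_le_iff_le_add'.2 <| W1_le_W1_add hP hQ fun i j => by
      linarith [(abs_sub_le_iff.1 (h i j)).1],
     sub_le_iff_le_add'.2 <| W1_le_W1_add hP hQ fun i j => by
      linarith [(abs_sub_le_iff.1 (h i j)).2]⟩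

end W1

theorem ciSup_le_ciSup_add {ι : Type*} [Finite ι] [Nonempty ι] {f g : ι → ℝ} {C : ℝ}
    (h : ∀ a, f a ≤ g a + C) : ⨆ a, f a ≤ (⨆ a, g a) + C :=
  ciSup_le fun a => (h a).trans (add_le_add_left (le_ciSup (Finite.bddAbove_range g) a) C)

theorem abs_ciSup_sub_ciSup_le {ι : Type*} [Finite ι] [Nonempty ι] {f g : ι → ℝ} {C : ℝ}
    (h : ∀ a, |f a - g a| ≤ C) : |(⨆ a, f a) - ⨆ a, g a| ≤ C :=
  abs_sub_le_iff.2
    ⟨sub_le_iff_le_add'.2 <| ciSup_le_ciSup_add fun a => by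
      linarith [(abs_sub_le_iff.1 (h a)).1],
     sub_le_iff_le_add'.2 <| ciSup_le_ciSup_add fun a => by
      linarith [(abs_sub_le_iff.1 (h a)).2]⟩

theorem dist_pi_eq_iSup {ι : Type*} [Fintype ι] {X : ι → Type*} [∀ i, PseudoMetricSpace (X i)]
    (f g : ∀ i, X i) : dist f g = ⨆ i, dist (f i) (g i) :=
  le_antisymm
    ((dist_pi_le_iff (Real.iSup_nonneg fun _ => dist_nonneg)).2 fun i =>
      le_ciSup (Finite.bddAbove_range fun i => dist (f i) (g i)) i)
    (Real.iSup_le (fun i => dist_le_pi_dist f g i) dist_nonneg)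

theorem abs_apply_apply_sub_le_dist {ι κ : Type*} [Fintype ι] [Fintype κ] (d d' : ι → κ → ℝ)
    (i : ι) (j : κ) : |d i j - d' i j| ≤ dist d d' :=
  (Real.dist_eq _ _).symm.trans_le <|
    (dist_le_pi_dist (d i) (d' i) j).trans (dist_le_pi_dist d d' i)

theorem ContractingWith.fixedPoint_mem {α : Type*} [MetricSpace α] [CompleteSpace α]
    [Nonempty α] {K : NNReal} {f : α → α} (hf : ContractingWith K f) {s : Set α}
    (hs : IsClosed s) (hsf : Set.MapsTo f s s) {x : α} (hx : x ∈ s) : fixedPoint f hf ∈ s :=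
  hs.mem_of_tendsto (hf.tendsto_iterate_fixedPoint x) <|
    Eventually.of_forall fun n => hsf.iterate n hx

section Fop

variable [Fintype S] [Fintype A] [Nonempty A] {P P' : S → A → S → ℝ} (R R' : S → A → ℝ)
  {γ : ℝ}

theorem abs_Fop_sub_Fop_le (hγ : 0 ≤ γ) (hP : ∀ s a, IsProbDist (P s a))
    (hP' : ∀ s a, IsProbDist (P' s a)) {d d' : S → S → ℝ} {C : ℝ}
    (h : ∀ i j, |d i j - d' i j| ≤ C) (i j : S) :
    |Fop P P' R R' γ d i j - Fop P P' R R' γ d' i j| ≤ γ * C := by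
  refine abs_ciSup_sub_ciSup_le fun a => ?_
  rw [add_sub_add_left_eq_sub, ← mul_sub, abs_mul, abs_of_nonneg hγ]
  exact mul_le_mul_of_nonneg_left (abs_W1_sub_W1_le (hP i a) (hP' j a) h) hγ

theorem lipschitzWith_Fop (hγ : 0 ≤ γ) (hP : ∀ s a, IsProbDist (P s a))
    (hP' : ∀ s a, IsProbDist (P' s a)) : LipschitzWith ⟨γ, hγ⟩ (Fop P P' R R' γ) := by
  refine LipschitzWith.of_dist_le_mul fun d d' => ?_
  have hC : 0 ≤ γ * dist d d' := mul_nonneg hγ dist_nonneg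
  refine (dist_pi_le_iff hC).2 fun i => (dist_pi_le_iff hC).2 fun j => ?_
  exact (Real.dist_eq _ _).trans_le <|
    abs_Fop_sub_Fop_le R R' hγ hP hP' (abs_apply_apply_sub_le_dist d d') i j

theorem mapsTo_Fop (hγ : 0 ≤ γ) (hP : ∀ s a, IsProbDist (P s a))
    (hP' : ∀ s a, IsProbDist (P' s a)) {M : ℝ}
    (hR : ∀ i j a, |R i a - R' j a| ≤ (1 - γ) * M) :
    Set.MapsTo (Fop P P' R R' γ) {d | ∀ i j, d i j ∈ Set.Icc 0 M}
      {d | ∀ i j, d i j ∈ Set.Icc 0 M} := by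
  intro d hd i j
  have hW0 a : 0 ≤ W1 (P i a) (P' j a) d :=
    W1_nonneg (hP i a) (hP' j a) fun k l => (hd k l).1
  have hWM a : W1 (P i a) (P' j a) d ≤ M := W1_le (hP i a) (hP' j a) fun k l => (hd k l).2
  constructor
  · exact Real.iSup_nonneg fun a => add_nonneg (abs_nonneg _) (mul_nonneg hγ (hW0 a))
  · refine ciSup_le fun a => ?_
    linarith [hR i j a, mul_le_mul_of_nonneg_left (hWM a) hγ]

end Fop

theorem isClosed_setOf_forall_forall_mem_Icc (M : ℝ) :
    IsClosed {d : S → S → ℝ | ∀ i j, d i j ∈ Set.Icc 0 M} := by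
  simp only [Set.ofPred_forall]
  exact isClosed_iInter fun i => isClosed_iInter fun j => isClosed_Icc.preimage (by fun_prop)

theorem Fop_contraction_and_fixed_point_general [Fintype S] [Fintype A] [Nonempty A]
    (P P' : S → A → S → ℝ) (R R' : S → A → ℝ) (γ Rmax : ℝ)
    (hγ : γ ∈ Set.Ioo (0:ℝ) 1)
    (hP : ∀ s a, IsProbDist (P s a)) (hP' : ∀ s a, IsProbDist (P' s a))
    (hRmax : Rmax = ⨆ i : S, ⨆ j : S, ⨆ a : A, |R i a - R' j a|) :
    (∀ d d' : S → S → ℝ,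
        (∀ i j, d i j ∈ Set.Icc (0:ℝ) (Rmax / (1 - γ))) →
        (∀ i j, d' i j ∈ Set.Icc (0:ℝ) (Rmax / (1 - γ))) →
        (⨆ i : S, ⨆ j : S, |Fop P P' R R' γ d i j - Fop P P' R R' γ d' i j|) ≤
          γ * ⨆ i : S, ⨆ j : S, |d i j - d' i j|) ∧
    (∃! dbar : S → S → ℝ,
        (∀ i j, dbar i j ∈ Set.Icc (0:ℝ) (Rmax / (1 - γ))) ∧
        Fop P P' R R' γ dbar = dbar) := by
  obtain ⟨hγ0, hγ1⟩ := hγ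
  have hRmax0 : 0 ≤ Rmax :=
    hRmax ▸ Real.iSup_nonneg fun _ => Real.iSup_nonneg fun _ => Real.iSup_nonneg fun _ =>
      abs_nonneg _
  have hR i j a : |R i a - R' j a| ≤ (1 - γ) * (Rmax / (1 - γ)) := by
    rw [mul_div_cancel₀ _ (sub_ne_zero.2 hγ1.ne'), hRmax]
    calc |R i a - R' j a| ≤ ⨆ a, |R i a - R' j a| :=
        le_ciSup (f := fun a => |R i a - R' j a|) (Finite.bddAbove_range _) a
      _ ≤ ⨆ j, ⨆ a, |R i a - R' j a| :=
        le_ciSup (f := fun j => ⨆ a, |R i a - R' j a|) (Finite.bddAbove_range _) j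
      _ ≤ _ := le_ciSup (f := fun i => ⨆ j, ⨆ a, |R i a - R' j a|) (Finite.bddAbove_range _) i
  have hF : ContractingWith ⟨γ, hγ0.le⟩ (Fop P P' R R' γ) :=
    ⟨by exact_mod_cast hγ1, lipschitzWith_Fop R R' hγ0.le hP hP'⟩
  refine ⟨fun d d' _ _ => ?_, ContractingWith.fixedPoint _ hF, ⟨?_, hF.fixedPoint_isFixedPt⟩,
    fun d hd => hF.fixedPoint_unique hd.2⟩
  · have h := hF.dist_le_mul d d'
    simp only [dist_pi_eq_iSup, Real.dist_eq] at h
    exact h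
  · exact hF.fixedPoint_mem (isClosed_setOf_forall_forall_mem_Icc _)
      (mapsTo_Fop R R' hγ0.le hP hP' hR) (x := 0) fun _ _ =>
        ⟨le_rfl, div_nonneg hRmax0 (sub_pos.2 hγ1).le⟩

theorem Fop_contraction_and_fixed_point [Fintype S] [Nonempty S] [Fintype A] [Nonempty A]
    (P P' : S → A → S → ℝ) (R R' : S → A → ℝ) (γ Rmax : ℝ)
    (hγ : γ ∈ Set.Ioo (0:ℝ) 1)
    (hP : ∀ s a, IsProbDist (P s a)) (hP' : ∀ s a, IsProbDist (P' s a))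
    (hRmax : Rmax = ⨆ i : S, ⨆ j : S, ⨆ a : A, |R i a - R' j a|) :
    (∀ d d' : S → S → ℝ,
        (∀ i j, d i j ∈ Set.Icc (0:ℝ) (Rmax / (1 - γ))) →
        (∀ i j, d' i j ∈ Set.Icc (0:ℝ) (Rmax / (1 - γ))) →
        (⨆ i : S, ⨆ j : S, |Fop P P' R R' γ d i j - Fop P P' R R' γ d' i j|) ≤
          γ * ⨆ i : S, ⨆ j : S, |d i j - d' i j|) ∧
    (∃! dbar : S → S → ℝ,
        (∀ i j, dbar i j ∈ Set.Icc (0:ℝ) (Rmax / (1 - γ))) ∧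
        Fop P P' R R' γ dbar = dbar) :=
  Fop_contraction_and_fixed_point_general P P' R R' γ Rmax hγ hP hP' hRmax
end

section
/- Let π be any (deterministic) policy, and let V*_real, V^π_real, V*_DT, V^π_DT denote the optimal and policy value functions of the real and DT finite MDPs (sharing S, A, γ). Then the sub-optimality of π in the real MDP satisfies max_i (V*_real(s_i) − V^π_real(s_i)) ≤ (2/(1−γ)) · max_i d̄(s_i, s_i) + ((1+γ)/(1−γ)) · max_i (V*_DT(s_i) − V^π_DT(s_i)), where d̄ is the DT bisimulation metric. -/
open Finset Filter

variable {S A : Type*}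

lemma fin_le_ciSup {ι : Type*} [Fintype ι] [Nonempty ι] (f : ι → ℝ) (i : ι) :
    f i ≤ ⨆ j, f j :=
  le_ciSup (Set.finite_range f).bddAbove i

lemma abs_ciSup_sub {ι : Type*} [Fintype ι] [Nonempty ι] (f g : ι → ℝ) :
    |(⨆ i, f i) - ⨆ i, g i| ≤ ⨆ i, |f i - g i| := by
  rw [abs_sub_le_iff]
  constructor
  · rw [sub_le_iff_le_add]
    refine ciSup_le fun i => ?_
    have h1 := fin_le_ciSup g i
    have h2 := fin_le_ciSup (fun i => |f i - g i|) i
    have h3 := le_abs_self (f i - g i)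
    linarith
  · rw [sub_le_iff_le_add]
    refine ciSup_le fun i => ?_
    have h1 := fin_le_ciSup f i
    have h2 := fin_le_ciSup (fun i => |f i - g i|) i
    have h3 := neg_abs_le (f i - g i)
    linarith

lemma coupling_sum_one [Fintype S] {P Q : S → ℝ} {lam : S → S → ℝ}
    (h : IsCoupling P Q lam) (hP : ∑ i, P i = 1) :
    ∑ i, ∑ j, lam i j = 1 := by
  calc ∑ i, ∑ j, lam i j = ∑ i, P i := Finset.sum_congr rfl fun i _ => h.2.1 i
    _ = 1 := hP

lemma coupling_sum_eq [Fintype S] {P Q : S → ℝ} {lam : S → S → ℝ}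
    (h : IsCoupling P Q lam) (f g : S → ℝ) :
    (∑ t, P t * f t) - ∑ u, Q u * g u = ∑ t, ∑ u, lam t u * (f t - g u) := by
  have h1 : ∑ t, P t * f t = ∑ t, ∑ u, lam t u * f t := by
    refine Finset.sum_congr rfl fun t _ => ?_
    rw [← h.2.1 t, Finset.sum_mul]
  have h2 : ∑ u, Q u * g u = ∑ t, ∑ u, lam t u * g u := by
    rw [Finset.sum_comm]
    refine Finset.sum_congr rfl fun u _ => ?_
    rw [← h.2.2 u, Finset.sum_mul]
  rw [h1, h2, ← Finset.sum_sub_distrib]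
  refine Finset.sum_congr rfl fun t _ => ?_
  rw [← Finset.sum_sub_distrib]
  exact Finset.sum_congr rfl fun u _ => by ring

lemma W1_exists_coupling [Fintype S] {P Q : S → ℝ} (hP : IsProbDist P) (hQ : IsProbDist Q)
    (d : S → S → ℝ) {ε : ℝ} (hε : 0 < ε) :
    ∃ lam, IsCoupling P Q lam ∧ ∑ i, ∑ j, lam i j * d i j ≤ W1 P Q d + ε := by
  have hne : Set.Nonempty {c : ℝ | ∃ lam, IsCoupling P Q lam ∧ c = ∑ i, ∑ j, lam i j * d i j} := by
    refine ⟨∑ i, ∑ j, (fun i j => P i * Q j) i j * d i j, fun i j => P i * Q j,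
      ⟨fun i j => mul_nonneg (hP.1 i) (hQ.1 j), fun i => ?_, fun j => ?_⟩, rfl⟩
    · rw [← Finset.mul_sum, hQ.2, mul_one]
    · rw [← Finset.sum_mul, hP.2, one_mul]
  obtain ⟨c, ⟨lam, hlam, rfl⟩, hc⟩ := Real.lt_sInf_add_pos hne hε
  exact ⟨lam, hlam, le_of_lt hc⟩

lemma sum_diff_bound [Fintype S] {P Q : S → ℝ} {lam : S → S → ℝ}
    (hlam : IsCoupling P Q lam) (hP1 : ∑ i, P i = 1)
    {f g : S → ℝ} {d : S → S → ℝ} {C : ℝ}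
    (h : ∀ t u, |f t - g u| ≤ d t u + C) :
    |(∑ t, P t * f t) - ∑ u, Q u * g u| ≤ (∑ i, ∑ j, lam i j * d i j) + C := by
  rw [coupling_sum_eq hlam]
  calc |∑ t, ∑ u, lam t u * (f t - g u)|
      ≤ ∑ t, |∑ u, lam t u * (f t - g u)| := Finset.abs_sum_le_sum_abs _ _
    _ ≤ ∑ t, ∑ u, |lam t u * (f t - g u)| :=
        Finset.sum_le_sum fun t _ => Finset.abs_sum_le_sum_abs _ _
    _ = ∑ t, ∑ u, lam t u * |f t - g u| := by
        refine Finset.sum_congr rfl fun t _ => Finset.sum_congr rfl fun u _ => ?_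
        rw [abs_mul, abs_of_nonneg (hlam.1 t u)]
    _ ≤ ∑ t, ∑ u, lam t u * (d t u + C) :=
        Finset.sum_le_sum fun t _ => Finset.sum_le_sum fun u _ =>
          mul_le_mul_of_nonneg_left (h t u) (hlam.1 t u)
    _ = (∑ t, ∑ u, lam t u * d t u) + (∑ t, ∑ u, lam t u) * C := by
        simp [mul_add, Finset.sum_add_distrib, Finset.sum_mul]
    _ = _ := by rw [coupling_sum_one hlam hP1, one_mul]

theorem transfer_suboptimality_bound_W1 [Fintype S] [Nonempty S] [Fintype A] [Nonempty A]
    (P P' : S → A → S → ℝ) (R R' : S → A → ℝ) (γ Rmax : ℝ)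
    (hγ : γ ∈ Set.Ioo (0:ℝ) 1)
    (hP : ∀ s a, IsProbDist (P s a)) (hP' : ∀ s a, IsProbDist (P' s a))
    (hRmax : Rmax = ⨆ i : S, ⨆ j : S, ⨆ a : A, |R i a - R' j a|)
    (π : S → A)
    (Vreal VDT Vπreal VπDT : S → ℝ)
    (hVreal : bellman P R γ Vreal = Vreal)
    (hVDT : bellman P' R' γ VDT = VDT)
    (hVπreal : ∀ s, Vπreal s = R s (π s) + γ * ∑ t, P s (π s) t * Vπreal t)
    (hVπDT : ∀ s, VπDT s = R' s (π s) + γ * ∑ t, P' s (π s) t * VπDT t)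
    (dbar : S → S → ℝ)
    (hdbar_mem : ∀ i j, dbar i j ∈ Set.Icc (0:ℝ) (Rmax / (1 - γ)))
    (hdbar_fix : Fop P P' R R' γ dbar = dbar) :
    (⨆ i : S, (Vreal i - Vπreal i)) ≤
      (2 / (1 - γ)) * (⨆ i : S, dbar i i) +
        ((1 + γ) / (1 - γ)) * ⨆ i : S, (VDT i - VπDT i) := by
  obtain ⟨hγ0, hγ1⟩ := hγ
  have h1γ : (0:ℝ) < 1 - γ := by linarith
  set D := ⨆ i : S, dbar i i with hD
  set Δ := ⨆ i : S, (VDT i - VπDT i) with hΔ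
  have hd0 : ∀ i j, 0 ≤ dbar i j := fun i j => (hdbar_mem i j).1
  have hdD : ∀ i, dbar i i ≤ D := fun i => fin_le_ciSup (fun i => dbar i i) i
  have hD0 : 0 ≤ D := le_trans (hd0 _ _) (hdD (Classical.arbitrary S))
  -- dbar dominates each one-action value of Fop
  have hFle : ∀ i j a, |R i a - R' j a| + γ * W1 (P i a) (P' j a) dbar ≤ dbar i j := by
    intro i j a
    have hfix := congrFun (congrFun hdbar_fix i) j
    calc |R i a - R' j a| + γ * W1 (P i a) (P' j a) dbar
        ≤ Fop P P' R R' γ dbar i j :=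
          fin_le_ciSup (fun a => |R i a - R' j a| + γ * W1 (P i a) (P' j a) dbar) a
      _ = dbar i j := hfix
  -- Step B : VπDT ≤ VDT
  have hPile : ∀ s, VπDT s ≤ VDT s := by
    have hG : (⨆ s, (VπDT s - VDT s)) ≤ γ * ⨆ s, (VπDT s - VDT s) := by
      refine ciSup_le fun s => ?_
      have hb : VDT s = ⨆ a, (R' s a + γ * ∑ t, P' s a t * VDT t) := (congrFun hVDT s).symm
      have h1 : R' s (π s) + γ * ∑ t, P' s (π s) t * VDT t ≤ VDT s := by
        rw [hb]
        exact fin_le_ciSup (fun a => R' s a + γ * ∑ t, P' s a t * VDT t) (π s)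
      have h2 : (∑ t, P' s (π s) t * VπDT t) - ∑ t, P' s (π s) t * VDT t
          ≤ ⨆ s, (VπDT s - VDT s) := by
        rw [← Finset.sum_sub_distrib]
        calc ∑ t, (P' s (π s) t * VπDT t - P' s (π s) t * VDT t)
            = ∑ t, P' s (π s) t * (VπDT t - VDT t) :=
              Finset.sum_congr rfl fun t _ => by ring
          _ ≤ ∑ t, P' s (π s) t * ⨆ s, (VπDT s - VDT s) :=
              Finset.sum_le_sum fun t _ => mul_le_mul_of_nonneg_left
                (fin_le_ciSup (fun s => VπDT s - VDT s) t) ((hP' s (π s)).1 t)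
          _ = ⨆ s, (VπDT s - VDT s) := by rw [← Finset.sum_mul, (hP' s (π s)).2, one_mul]
      have h3 := mul_le_mul_of_nonneg_left h2 hγ0.le
      have h4 := hVπDT s
      linarith
    intro s
    have h5 : (⨆ s, (VπDT s - VDT s)) ≤ 0 := by nlinarith [hG]
    have := le_trans (fin_le_ciSup (fun s => VπDT s - VDT s) s) h5
    linarith
  have hΔi : ∀ i, VDT i - VπDT i ≤ Δ := fun i => fin_le_ciSup (fun i => VDT i - VπDT i) i
  have hΔ0 : 0 ≤ Δ := by
    have := hPile (Classical.arbitrary S)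
    have := hΔi (Classical.arbitrary S)
    linarith
  -- Step A : |Vreal t - VDT u| ≤ dbar t u
  have hA : ∀ t u, |Vreal t - VDT u| ≤ dbar t u := by
    set M := ⨆ t, ⨆ u, (|Vreal t - VDT u| - dbar t u) with hMdef
    set M' := max M 0 with hM'def
    have hMle : ∀ t u, |Vreal t - VDT u| ≤ dbar t u + M' := by
      intro t u
      have h1 : |Vreal t - VDT u| - dbar t u ≤ ⨆ u, (|Vreal t - VDT u| - dbar t u) :=
        fin_le_ciSup (fun u => |Vreal t - VDT u| - dbar t u) u
      have h2 : (⨆ u, (|Vreal t - VDT u| - dbar t u)) ≤ M :=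
        fin_le_ciSup (fun t => ⨆ u, (|Vreal t - VDT u| - dbar t u)) t
      have h3 : M ≤ M' := le_max_left _ _
      linarith
    have hkey : ∀ ε > (0:ℝ), M ≤ γ * M' + γ * ε := by
      intro ε hε
      refine ciSup_le fun t => ciSup_le fun u => ?_
      have hbr : Vreal t = ⨆ a, (R t a + γ * ∑ x, P t a x * Vreal x) := (congrFun hVreal t).symm
      have hbd : VDT u = ⨆ a, (R' u a + γ * ∑ x, P' u a x * VDT x) := (congrFun hVDT u).symm
      have habs : |Vreal t - VDT u| ≤ ⨆ a : A,
          |(R t a + γ * ∑ x, P t a x * Vreal x) - (R' u a + γ * ∑ x, P' u a x * VDT x)| := by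
        rw [hbr, hbd]; exact abs_ciSup_sub _ _
      have hper : ∀ a : A,
          |(R t a + γ * ∑ x, P t a x * Vreal x) - (R' u a + γ * ∑ x, P' u a x * VDT x)|
            ≤ dbar t u + (γ * M' + γ * ε) := by
        intro a
        obtain ⟨lam, hlam, hcost⟩ := W1_exists_coupling (hP t a) (hP' u a) dbar hε
        have hsum : |(∑ x, P t a x * Vreal x) - ∑ x, P' u a x * VDT x|
            ≤ (∑ i, ∑ j, lam i j * dbar i j) + M' :=
          sum_diff_bound hlam (hP t a).2 hMle
        have htr : |(R t a + γ * ∑ x, P t a x * Vreal x) - (R' u a + γ * ∑ x, P' u a x * VDT x)|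
            ≤ |R t a - R' u a| + γ * |(∑ x, P t a x * Vreal x) - ∑ x, P' u a x * VDT x| := by
          have := abs_add_le (R t a - R' u a) (γ * ((∑ x, P t a x * Vreal x) - ∑ x, P' u a x * VDT x))
          have habsmul : |γ * ((∑ x, P t a x * Vreal x) - ∑ x, P' u a x * VDT x)|
              = γ * |(∑ x, P t a x * Vreal x) - ∑ x, P' u a x * VDT x| := by
            rw [abs_mul, abs_of_nonneg hγ0.le]
          calc |(R t a + γ * ∑ x, P t a x * Vreal x) - (R' u a + γ * ∑ x, P' u a x * VDT x)|
              = |(R t a - R' u a) + γ * ((∑ x, P t a x * Vreal x) - ∑ x, P' u a x * VDT x)| := by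
                ring_nf
            _ ≤ _ := by rw [← habsmul]; exact this
        have hW := hFle t u a
        have h6 := mul_le_mul_of_nonneg_left hsum hγ0.le
        have h7 := mul_le_mul_of_nonneg_left hcost hγ0.le
        have h8 := mul_le_mul_of_nonneg_left (le_of_eq (rfl : M' = M')) hγ0.le
        nlinarith [htr]
      have := ciSup_le hper
      linarith [le_trans habs this]
    have hM0 : M ≤ 0 := by
      by_contra hc
      push_neg at hc
      have hMM : M ≤ γ * M' := by
        refine le_of_forall_pos_le_add fun ε hε => ?_
        have := hkey (ε / γ) (by positivity)
        have : γ * (ε / γ) = ε := by field_simp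
        linarith [hkey (ε / γ) (by positivity : (0:ℝ) < ε / γ), this]
      have hM'M : M' = M := max_eq_left hc.le
      rw [hM'M] at hMM
      nlinarith
    intro t u
    have hM'0 : M' = 0 := max_eq_right hM0
    have := hMle t u
    rw [hM'0] at this
    linarith
  -- Step C : bound on E = sup |Vπreal - VπDT|
  set E := ⨆ i, |Vπreal i - VπDT i| with hEdef
  have hEi : ∀ i, |Vπreal i - VπDT i| ≤ E := fun i => fin_le_ciSup (fun i => |Vπreal i - VπDT i|) i
  have hfg : ∀ t u, |VπDT t - VπDT u| ≤ dbar t u + (D + Δ) := by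
    intro t u
    rw [abs_sub_le_iff]
    obtain ⟨h1, h2⟩ := abs_le.1 (hA t t)
    obtain ⟨h3, h4⟩ := abs_le.1 (hA t u)
    have h5 := hPile t
    have h6 := hPile u
    have h7 := hΔi t
    have h8 := hΔi u
    have h9 := hdD t
    constructor <;> linarith
  have hEkey : ∀ ε > (0:ℝ), E ≤ (1 + γ) * D + γ * Δ + γ * E + γ * ε := by
    intro ε hε
    refine ciSup_le fun s => ?_
    obtain ⟨lam, hlam, hcost⟩ := W1_exists_coupling (hP s (π s)) (hP' s (π s)) dbar hε
    have h2 : |(∑ t, P s (π s) t * VπDT t) - ∑ u, P' s (π s) u * VπDT u|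
        ≤ (∑ i, ∑ j, lam i j * dbar i j) + (D + Δ) :=
      sum_diff_bound hlam (hP s (π s)).2 hfg
    have h1 : |(∑ t, P s (π s) t * Vπreal t) - ∑ t, P s (π s) t * VπDT t| ≤ E := by
      rw [← Finset.sum_sub_distrib]
      calc |∑ t, (P s (π s) t * Vπreal t - P s (π s) t * VπDT t)|
          ≤ ∑ t, |P s (π s) t * Vπreal t - P s (π s) t * VπDT t| :=
            Finset.abs_sum_le_sum_abs _ _
        _ = ∑ t, P s (π s) t * |Vπreal t - VπDT t| := by
            refine Finset.sum_congr rfl fun t _ => ?_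
            rw [← mul_sub, abs_mul, abs_of_nonneg ((hP s (π s)).1 t)]
        _ ≤ ∑ t, P s (π s) t * E :=
            Finset.sum_le_sum fun t _ => mul_le_mul_of_nonneg_left (hEi t) ((hP s (π s)).1 t)
        _ = E := by rw [← Finset.sum_mul, (hP s (π s)).2, one_mul]
    have hXY : |(∑ t, P s (π s) t * Vπreal t) - ∑ u, P' s (π s) u * VπDT u|
        ≤ E + ((∑ i, ∑ j, lam i j * dbar i j) + (D + Δ)) := by
      calc |(∑ t, P s (π s) t * Vπreal t) - ∑ u, P' s (π s) u * VπDT u|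
          ≤ |(∑ t, P s (π s) t * Vπreal t) - ∑ t, P s (π s) t * VπDT t|
            + |(∑ t, P s (π s) t * VπDT t) - ∑ u, P' s (π s) u * VπDT u| :=
            abs_sub_le _ _ _
        _ ≤ _ := add_le_add h1 h2
    have htr : |Vπreal s - VπDT s| ≤ |R s (π s) - R' s (π s)|
        + γ * |(∑ t, P s (π s) t * Vπreal t) - ∑ u, P' s (π s) u * VπDT u| := by
      rw [hVπreal s, hVπDT s]
      have := abs_add_le (R s (π s) - R' s (π s))
        (γ * ((∑ t, P s (π s) t * Vπreal t) - ∑ u, P' s (π s) u * VπDT u))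
      have habsmul : |γ * ((∑ t, P s (π s) t * Vπreal t) - ∑ u, P' s (π s) u * VπDT u)|
          = γ * |(∑ t, P s (π s) t * Vπreal t) - ∑ u, P' s (π s) u * VπDT u| := by
        rw [abs_mul, abs_of_nonneg hγ0.le]
      calc |(R s (π s) + γ * ∑ t, P s (π s) t * Vπreal t)
            - (R' s (π s) + γ * ∑ t, P' s (π s) t * VπDT t)|
          = |(R s (π s) - R' s (π s))
            + γ * ((∑ t, P s (π s) t * Vπreal t) - ∑ u, P' s (π s) u * VπDT u)| := by
            ring_nf
        _ ≤ _ := by rw [← habsmul]; exact this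
    have hW := hFle s s (π s)
    have h6 := mul_le_mul_of_nonneg_left hXY hγ0.le
    have h7 := mul_le_mul_of_nonneg_left hcost hγ0.le
    have h9 := hdD s
    nlinarith [htr]
  have hE : (1 - γ) * E ≤ (1 + γ) * D + γ * Δ := by
    have hEC : E ≤ (1 + γ) * D + γ * Δ + γ * E := by
      refine le_of_forall_pos_le_add fun ε hε => ?_
      have hk := hEkey (ε / γ) (by positivity)
      have hγε : γ * (ε / γ) = ε := by field_simp
      linarith
    linarith
  -- final combination
  refine ciSup_le fun i => ?_
  obtain ⟨ha1, ha2⟩ := abs_le.1 (hA i i)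
  obtain ⟨hb1, hb2⟩ := abs_le.1 (hEi i)
  have hX : Vreal i - Vπreal i ≤ D + Δ + E := by
    have := hΔi i
    have := hdD i
    linarith
  rw [div_mul_eq_mul_div, div_mul_eq_mul_div, ← add_div, le_div_iff₀ h1γ]
  nlinarith [mul_le_mul_of_nonneg_right hX h1γ.le, hE, hΔ0, hD0]
end

section
/- Define d_TV(s_i,s_i) = max_a { |R(s_i,a) − R'(s_i,a)| + (γ R_max / (1−γ)) · TV(P(·|s_i,a), P'(·|s_i,a)) }, where R_max = max_{i,j,a} |R(s_i,a) − R'(s_j,a)| and TV is the total variation distance. Then the DT bisimulation metric d̄ satisfies max_i d̄(s_i, s_i) ≤ (1/(1−γ)) · max_i d_TV(s_i, s_i). -/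
open Finset Filter

variable {S A : Type*}

lemma W1_le_bound [Fintype S] (P Q : S → ℝ) (hP : IsProbDist P) (hQ : IsProbDist Q)
    (d : S → S → ℝ) (B M : ℝ) (hM0 : 0 ≤ M)
    (hd0 : ∀ i j, 0 ≤ d i j) (hdB : ∀ i j, d i j ≤ B) (hdM : ∀ i, d i i ≤ M) :
    W1 P Q d ≤ M + TVdist P Q * (B - M) := by
  classical
  set m : S → ℝ := fun i => min (P i) (Q i) with hm
  set t : ℝ := ∑ i, (P i - m i) with ht
  have hm0 : ∀ i, 0 ≤ m i := fun i => le_min (hP.1 i) (hQ.1 i)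
  have ha0 : ∀ i, 0 ≤ P i - m i := fun i => by simp [hm, min_le_left]
  have hb0 : ∀ i, 0 ≤ Q i - m i := fun i => by simp [hm, min_le_right]
  have ht0 : 0 ≤ t := Finset.sum_nonneg fun i _ => ha0 i
  have hsm : ∑ i, m i = 1 - t := by
    have : t = (∑ i, P i) - ∑ i, m i := by rw [ht, Finset.sum_sub_distrib]
    rw [hP.2] at this; linarith
  have hbt : ∑ i, (Q i - m i) = t := by
    rw [Finset.sum_sub_distrib, hQ.2, hsm]; ring
  have hTV : TVdist P Q = t := by
    have habs : ∀ i, |P i - Q i| = (P i - m i) + (Q i - m i) := by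
      intro i
      rcases le_total (P i) (Q i) with h | h
      · have hmi : m i = P i := min_eq_left h
        rw [abs_of_nonpos (by linarith), hmi]; ring
      · have hmi : m i = Q i := min_eq_right h
        rw [abs_of_nonneg (by linarith), hmi]; ring
    simp only [TVdist, habs]
    rw [Finset.sum_add_distrib, hbt, ← ht]; ring
  have hbdd : BddBelow {c : ℝ | ∃ lam, IsCoupling P Q lam ∧ c = ∑ i, ∑ j, lam i j * d i j} := by
    refine ⟨0, fun c hc => ?_⟩
    obtain ⟨lam, hlam, rfl⟩ := hc
    exact Finset.sum_nonneg fun i _ => Finset.sum_nonneg fun j _ =>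
      mul_nonneg (hlam.1 i j) (hd0 i j)
  rw [hTV]
  rcases eq_or_lt_of_le ht0 with htz | htpos
  · -- t = 0 : diagonal coupling
    have hPm : ∀ i, P i - m i = 0 := fun i =>
      (Finset.sum_eq_zero_iff_of_nonneg (fun i _ => ha0 i)).mp htz.symm i (Finset.mem_univ i)
    have hQm : ∀ i, Q i - m i = 0 := fun i => by
      have h0 : ∑ i, (Q i - m i) = 0 := by rw [hbt, ← htz]
      exact (Finset.sum_eq_zero_iff_of_nonneg (fun i _ => hb0 i)).mp h0 i (Finset.mem_univ i)
    set lam : S → S → ℝ := fun i j => if i = j then m i else 0 with hlamdef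
    have hcoup : IsCoupling P Q lam := by
      refine ⟨fun i j => ?_, fun i => ?_, fun j => ?_⟩
      · rcases eq_or_ne i j with h | h
        · subst h; simpa [hlamdef] using hm0 i
        · simp [hlamdef, h]
      · have := hPm i
        simp only [hlamdef, Finset.sum_ite_eq, Finset.mem_univ, if_true]
        linarith
      · have := hQm j
        simp only [hlamdef, Finset.sum_ite_eq', Finset.mem_univ, if_true]
        linarith
    have hmem : (∑ i, ∑ j, lam i j * d i j) ∈
        {c : ℝ | ∃ lam, IsCoupling P Q lam ∧ c = ∑ i, ∑ j, lam i j * d i j} :=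
      ⟨lam, hcoup, rfl⟩
    refine (csInf_le hbdd hmem).trans ?_
    have hcost : (∑ i, ∑ j, lam i j * d i j) = ∑ i, m i * d i i := by
      refine Finset.sum_congr rfl fun i _ => ?_
      have : ∀ j, lam i j * d i j = if i = j then m i * d i j else 0 := by
        intro j
        rcases eq_or_ne i j with h | h
        · subst h; simp [hlamdef]
        · simp [hlamdef, h]
      simp only [this, Finset.sum_ite_eq, Finset.mem_univ, if_true]
    rw [hcost, ← htz]
    have h1 : ∑ i, m i * d i i ≤ ∑ i, m i * M :=
      Finset.sum_le_sum fun i _ => mul_le_mul_of_nonneg_left (hdM i) (hm0 i)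
    rw [← Finset.sum_mul, hsm, ← htz] at h1
    linarith
  · -- t > 0 : maximal coupling
    have htne : t ≠ 0 := ne_of_gt htpos
    set lam : S → S → ℝ :=
      fun i j => (if i = j then m i else 0) + (P i - m i) * (Q j - m j) / t with hlamdef
    have hprod0 : ∀ i j, (0:ℝ) ≤ (P i - m i) * (Q j - m j) / t := fun i j =>
      div_nonneg (mul_nonneg (ha0 i) (hb0 j)) ht0
    have hcoup : IsCoupling P Q lam := by
      refine ⟨fun i j => ?_, fun i => ?_, fun j => ?_⟩
      · rcases eq_or_ne i j with h | h
        · subst h; simpa [hlamdef] using add_nonneg (hm0 i) (hprod0 i i)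
        · simpa [hlamdef, h] using hprod0 i j
      · have h2 : ∑ j, (P i - m i) * (Q j - m j) / t = P i - m i := by
          rw [← Finset.sum_div, ← Finset.mul_sum, hbt]
          field_simp
        simp only [hlamdef, Finset.sum_add_distrib, h2,
          Finset.sum_ite_eq, Finset.mem_univ, if_true]
        ring
      · have h2 : ∑ i, (P i - m i) * (Q j - m j) / t = Q j - m j := by
          rw [← Finset.sum_div, ← Finset.sum_mul, ← ht]
          field_simp
        simp only [hlamdef, Finset.sum_add_distrib, h2,
          Finset.sum_ite_eq', Finset.mem_univ, if_true]
        ring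
    have hmem : (∑ i, ∑ j, lam i j * d i j) ∈
        {c : ℝ | ∃ lam, IsCoupling P Q lam ∧ c = ∑ i, ∑ j, lam i j * d i j} :=
      ⟨lam, hcoup, rfl⟩
    refine (csInf_le hbdd hmem).trans ?_
    have hcost : (∑ i, ∑ j, lam i j * d i j)
        = (∑ i, m i * d i i) + ∑ i, ∑ j, (P i - m i) * (Q j - m j) / t * d i j := by
      have hpt : ∀ i j, lam i j * d i j
          = (if i = j then m i * d i j else 0) + (P i - m i) * (Q j - m j) / t * d i j := by
        intro i j
        rcases eq_or_ne i j with h | h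
        · subst h; simp [hlamdef]; ring
        · simp [hlamdef, h]
      simp only [hpt, Finset.sum_add_distrib, Finset.sum_ite_eq, Finset.mem_univ, if_true]
    rw [hcost]
    have h1 : ∑ i, m i * d i i ≤ (1 - t) * M := by
      have : ∑ i, m i * d i i ≤ ∑ i, m i * M :=
        Finset.sum_le_sum fun i _ => mul_le_mul_of_nonneg_left (hdM i) (hm0 i)
      rw [← Finset.sum_mul, hsm] at this
      linarith
    have h2 : ∑ i, ∑ j, (P i - m i) * (Q j - m j) / t * d i j ≤ t * B := by
      have hle : ∑ i, ∑ j, (P i - m i) * (Q j - m j) / t * d i j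
          ≤ ∑ i, ∑ j, (P i - m i) * (Q j - m j) / t * B :=
        Finset.sum_le_sum fun i _ => Finset.sum_le_sum fun j _ =>
          mul_le_mul_of_nonneg_left (hdB i j) (hprod0 i j)
      refine hle.trans ?_
      have hrow : ∀ i, ∑ j, (P i - m i) * (Q j - m j) / t * B = (P i - m i) * B := by
        intro i
        rw [← Finset.sum_mul, ← Finset.sum_div, ← Finset.mul_sum, hbt]
        field_simp
      simp only [hrow]
      rw [← Finset.sum_mul, ← ht]
    nlinarith

theorem DTBSM_le_dTV [Fintype S] [Nonempty S] [Fintype A] [Nonempty A]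
    (P P' : S → A → S → ℝ) (R R' : S → A → ℝ) (γ Rmax : ℝ)
    (hγ : γ ∈ Set.Ioo (0:ℝ) 1)
    (hP : ∀ s a, IsProbDist (P s a)) (hP' : ∀ s a, IsProbDist (P' s a))
    (hRmax : Rmax = ⨆ i : S, ⨆ j : S, ⨆ a : A, |R i a - R' j a|)
    (dbar : S → S → ℝ)
    (hdbar_mem : ∀ i j, dbar i j ∈ Set.Icc (0:ℝ) (Rmax / (1 - γ)))
    (hdbar_fix : Fop P P' R R' γ dbar = dbar)
    (dTV : S → ℝ)
    (hdTV : ∀ i, dTV i = ⨆ a : A,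
      (|R i a - R' i a| + (γ * Rmax / (1 - γ)) * TVdist (P i a) (P' i a))) :
    (⨆ i : S, dbar i i) ≤ (1 / (1 - γ)) * ⨆ i : S, dTV i := by
  obtain ⟨hγ0, hγ1⟩ := hγ
  have h1γ : (0:ℝ) < 1 - γ := by linarith
  set B : ℝ := Rmax / (1 - γ) with hB
  set M : ℝ := ⨆ i : S, dbar i i with hM
  have hbddS : ∀ (f : S → ℝ), BddAbove (Set.range f) := fun f => (Set.finite_range f).bddAbove
  have hbddA : ∀ (f : A → ℝ), BddAbove (Set.range f) := fun f => (Set.finite_range f).bddAbove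
  have hdM : ∀ i, dbar i i ≤ M := fun i => le_ciSup (hbddS fun j => dbar j j) i
  have hM0 : 0 ≤ M :=
    le_trans (hdbar_mem (Classical.arbitrary S) (Classical.arbitrary S)).1
      (hdM (Classical.arbitrary S))
  have key : ∀ i, dbar i i ≤ dTV i + γ * M := by
    intro i
    have hfix := congrFun (congrFun hdbar_fix i) i
    rw [← hfix]
    simp only [Fop]
    refine ciSup_le fun a => ?_
    set t : ℝ := TVdist (P i a) (P' i a) with htdef
    have hW : W1 (P i a) (P' i a) dbar ≤ M + t * (B - M) :=
      W1_le_bound (P i a) (P' i a) (hP i a) (hP' i a) dbar B M hM0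
        (fun x y => (hdbar_mem x y).1) (fun x y => (hdbar_mem x y).2) hdM
    have ht0 : 0 ≤ t := by
      rw [htdef, TVdist]
      positivity
    have hterm : |R i a - R' i a| + (γ * Rmax / (1 - γ)) * t ≤ dTV i := by
      rw [hdTV i]
      exact le_ciSup (f := fun a => |R i a - R' i a| +
        (γ * Rmax / (1 - γ)) * TVdist (P i a) (P' i a)) (hbddA _) a
    have hγB : (γ * Rmax / (1 - γ)) * t = γ * (t * B) := by rw [hB]; ring
    have hγW : γ * W1 (P i a) (P' i a) dbar ≤ γ * (M + t * (B - M)) :=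
      mul_le_mul_of_nonneg_left hW hγ0.le
    have hexp : γ * (M + t * (B - M)) = γ * M + γ * (t * B) - γ * (t * M) := by ring
    have htM : 0 ≤ γ * (t * M) := by positivity
    linarith
  have hstep : M ≤ (⨆ i : S, dTV i) + γ * M := by
    rw [hM]
    refine ciSup_le fun i => ?_
    exact (key i).trans (add_le_add_left (le_ciSup (hbddS dTV) i) _)
  have hfin : (1 - γ) * M ≤ ⨆ i : S, dTV i := by linarith
  calc M = (1 / (1 - γ)) * ((1 - γ) * M) := by field_simp
    _ ≤ (1 / (1 - γ)) * ⨆ i : S, dTV i :=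
      mul_le_mul_of_nonneg_left hfin (by positivity)
end

section
/- For any deterministic policy π and finite MDPs ⟨S,A,P,R,γ⟩ and ⟨S,A,P',R',γ⟩, the policy value functions satisfy, for every state s_i: |V^π_real(s_i) − V^π_DT(s_i)| ≤ d̄(s_i,s_i) + γ · max_k (V*_real(s_k) − V^π_real(s_k)) + γ · max_k (V*_DT(s_k) − V^π_DT(s_k)), where d̄ is the DT bisimulation metric. -/
open Finset Filter

variable {S A : Type*}

lemma aux_bdd {α : Type*} [Fintype α] (f : α → ℝ) : BddAbove (Set.range f) :=
  (Set.finite_range f).bddAbove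

lemma aux_sum_mul_le [Fintype S] {p f : S → ℝ} {c : ℝ}
    (hp : IsProbDist p) (h : ∀ t, f t ≤ c) : ∑ t, p t * f t ≤ c := by
  calc ∑ t, p t * f t ≤ ∑ t, p t * c :=
        Finset.sum_le_sum fun t _ => mul_le_mul_of_nonneg_left (h t) (hp.1 t)
    _ = c := by rw [← Finset.sum_mul, hp.2, one_mul]

lemma aux_diff_le_W1 [Fintype S] {p q : S → ℝ} (hp : IsProbDist p) (hq : IsProbDist q)
    {d : S → S → ℝ} {f g : S → ℝ} {M : ℝ} (h : ∀ i j, |f i - g j| ≤ d i j + M) :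
    |∑ i, p i * f i - ∑ j, q j * g j| ≤ W1 p q d + M := by
  rw [← sub_le_iff_le_add]
  apply le_csInf
  · exact ⟨_, ⟨fun i j => p i * q j, ⟨fun i j => mul_nonneg (hp.1 i) (hq.1 j),
      fun i => by rw [← Finset.mul_sum, hq.2, mul_one],
      fun j => by rw [← Finset.sum_mul, hp.2, one_mul]⟩, rfl⟩⟩
  · rintro c ⟨lam, ⟨hnn, hrow, hcol⟩, rfl⟩
    rw [sub_le_iff_le_add]
    have h1 : ∑ i, p i * f i = ∑ i, ∑ j, lam i j * f i := by
      refine Finset.sum_congr rfl fun i _ => ?_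
      rw [← hrow i, Finset.sum_mul]
    have h2 : ∑ j, q j * g j = ∑ i, ∑ j, lam i j * g j := by
      rw [Finset.sum_comm]
      refine Finset.sum_congr rfl fun j _ => ?_
      rw [← hcol j, Finset.sum_mul]
    have hsum1 : ∑ i, ∑ j, lam i j = 1 := by
      calc ∑ i, ∑ j, lam i j = ∑ i, p i := Finset.sum_congr rfl fun i _ => hrow i
        _ = 1 := hp.2
    calc |∑ i, p i * f i - ∑ j, q j * g j|
        = |∑ i, ∑ j, (lam i j * f i - lam i j * g j)| := by
          rw [h1, h2, ← Finset.sum_sub_distrib]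
          congr 1
          exact Finset.sum_congr rfl fun i _ => (Finset.sum_sub_distrib _ _).symm
      _ ≤ ∑ i, ∑ j, |lam i j * f i - lam i j * g j| := by
          refine (Finset.abs_sum_le_sum_abs _ _).trans ?_
          exact Finset.sum_le_sum fun i _ => Finset.abs_sum_le_sum_abs _ _
      _ ≤ ∑ i, ∑ j, lam i j * (d i j + M) := by
          refine Finset.sum_le_sum fun i _ => Finset.sum_le_sum fun j _ => ?_
          rw [← mul_sub, abs_mul, abs_of_nonneg (hnn i j)]
          exact mul_le_mul_of_nonneg_left (h i j) (hnn i j)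
      _ = (∑ i, ∑ j, lam i j * d i j) + M := by
          simp only [mul_add, Finset.sum_add_distrib]
          congr 1
          have : ∑ i, ∑ j, lam i j * M = (∑ i, ∑ j, lam i j) * M := by
            rw [Finset.sum_mul]
            exact Finset.sum_congr rfl fun i _ => (Finset.sum_mul _ _ _).symm
          rw [this, hsum1, one_mul]

lemma aux_abs_ciSup_sub [Fintype A] [Nonempty A] (f h : A → ℝ) :
    |(⨆ a, f a) - ⨆ a, h a| ≤ ⨆ a, |f a - h a| := by
  rw [abs_sub_le_iff]
  constructor
  · rw [sub_le_iff_le_add]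
    refine ciSup_le fun a => ?_
    calc f a = (f a - h a) + h a := by ring
      _ ≤ |f a - h a| + h a := by gcongr; exact le_abs_self _
      _ ≤ (⨆ a, |f a - h a|) + ⨆ a, h a :=
          add_le_add (le_ciSup (aux_bdd fun a => |f a - h a|) a) (le_ciSup (aux_bdd _) a)
  · rw [sub_le_iff_le_add]
    refine ciSup_le fun a => ?_
    calc h a = (h a - f a) + f a := by ring
      _ ≤ |f a - h a| + f a := by gcongr; rw [abs_sub_comm]; exact le_abs_self _
      _ ≤ (⨆ a, |f a - h a|) + ⨆ a, f a :=
          add_le_add (le_ciSup (aux_bdd fun a => |f a - h a|) a) (le_ciSup (aux_bdd _) a)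

lemma aux_policy_le_opt [Fintype S] [Nonempty S] [Fintype A] [Nonempty A]
    (P : S → A → S → ℝ) (R : S → A → ℝ) {γ : ℝ} (hγ0 : 0 ≤ γ) (hγ1 : γ < 1)
    (hP : ∀ s a, IsProbDist (P s a)) (π : S → A) {V Vπ : S → ℝ}
    (hV : bellman P R γ V = V)
    (hVπ : ∀ s, Vπ s = R s (π s) + γ * ∑ t, P s (π s) t * Vπ t) :
    ∀ s, Vπ s ≤ V s := by
  obtain ⟨k, hk⟩ := Finite.exists_max (fun s => Vπ s - V s)
  have hVk : R k (π k) + γ * ∑ t, P k (π k) t * V t ≤ V k := by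
    conv_rhs => rw [← hV]
    exact le_ciSup (aux_bdd fun a => R k a + γ * ∑ t, P k a t * V t) (π k)
  have hsum : ∑ t, P k (π k) t * Vπ t - ∑ t, P k (π k) t * V t ≤ Vπ k - V k := by
    rw [← Finset.sum_sub_distrib]
    simp only [← mul_sub]
    exact aux_sum_mul_le (hP k (π k)) fun t => hk t
  have hkk : Vπ k - V k ≤ γ * (Vπ k - V k) := by
    have := hVπ k
    nlinarith
  have hk0 : Vπ k - V k ≤ 0 := by nlinarith
  intro s
  have := hk s
  linarith

lemma aux_value_le_dbar [Fintype S] [Nonempty S] [Fintype A] [Nonempty A]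
    (P P' : S → A → S → ℝ) (R R' : S → A → ℝ) {γ : ℝ} (hγ0 : 0 ≤ γ) (hγ1 : γ < 1)
    (hP : ∀ s a, IsProbDist (P s a)) (hP' : ∀ s a, IsProbDist (P' s a))
    {Vreal VDT : S → ℝ}
    (hVreal : bellman P R γ Vreal = Vreal)
    (hVDT : bellman P' R' γ VDT = VDT)
    {dbar : S → S → ℝ}
    (hdbar_fix : Fop P P' R R' γ dbar = dbar) :
    ∀ s t, |Vreal s - VDT t| ≤ dbar s t := by
  obtain ⟨⟨s0, t0⟩, hmax⟩ :=
    Finite.exists_max (fun p : S × S => |Vreal p.1 - VDT p.2| - dbar p.1 p.2)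
  set M : ℝ := |Vreal s0 - VDT t0| - dbar s0 t0 with hM
  have key : ∀ s t, |Vreal s - VDT t| ≤ dbar s t + γ * M := by
    intro s t
    have h1 : |Vreal s - VDT t| ≤
        ⨆ a : A, |(R s a + γ * ∑ u, P s a u * Vreal u) -
          (R' t a + γ * ∑ u, P' t a u * VDT u)| := by
      conv_lhs => rw [← hVreal, ← hVDT]
      exact aux_abs_ciSup_sub _ _
    refine h1.trans (ciSup_le fun a => ?_)
    have h2 : |(∑ u, P s a u * Vreal u) - ∑ u, P' t a u * VDT u| ≤
        W1 (P s a) (P' t a) dbar + M :=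
      aux_diff_le_W1 (hP s a) (hP' t a) fun i j => by
        have := hmax (i, j); simp only at this; linarith
    have h3 : |(R s a + γ * ∑ u, P s a u * Vreal u) -
        (R' t a + γ * ∑ u, P' t a u * VDT u)| ≤
        |R s a - R' t a| + γ * (W1 (P s a) (P' t a) dbar + M) := by
      have habs : |(R s a + γ * ∑ u, P s a u * Vreal u) -
          (R' t a + γ * ∑ u, P' t a u * VDT u)| ≤
          |R s a - R' t a| + |γ * ((∑ u, P s a u * Vreal u) - ∑ u, P' t a u * VDT u)| := by
        have : (R s a + γ * ∑ u, P s a u * Vreal u) -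
            (R' t a + γ * ∑ u, P' t a u * VDT u) =
            (R s a - R' t a) + γ * ((∑ u, P s a u * Vreal u) - ∑ u, P' t a u * VDT u) := by
          ring
        rw [this]
        exact abs_add_le _ _
      refine habs.trans ?_
      rw [abs_mul, abs_of_nonneg hγ0]
      exact add_le_add (le_refl _) (mul_le_mul_of_nonneg_left h2 hγ0)
    refine h3.trans ?_
    have h4 : |R s a - R' t a| + γ * W1 (P s a) (P' t a) dbar ≤ dbar s t := by
      conv_rhs => rw [← hdbar_fix]
      exact le_ciSup (aux_bdd fun a => |R s a - R' t a| + γ * W1 (P s a) (P' t a) dbar) a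
    nlinarith [h4]
  have hM0 : M ≤ 0 := by
    have := key s0 t0
    nlinarith
  intro s t
  have h1 := key s t
  have h2 : 0 ≤ γ * 0 - γ * M := by nlinarith
  linarith [mul_nonpos_of_nonneg_of_nonpos hγ0 hM0]

theorem policy_value_diff_bound [Fintype S] [Nonempty S] [Fintype A] [Nonempty A]
    (P P' : S → A → S → ℝ) (R R' : S → A → ℝ) (γ Rmax : ℝ)
    (hγ : γ ∈ Set.Ioo (0:ℝ) 1)
    (hP : ∀ s a, IsProbDist (P s a)) (hP' : ∀ s a, IsProbDist (P' s a))
    (hRmax : Rmax = ⨆ i : S, ⨆ j : S, ⨆ a : A, |R i a - R' j a|)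
    (π : S → A)
    (Vreal VDT Vπreal VπDT : S → ℝ)
    (hVreal : bellman P R γ Vreal = Vreal)
    (hVDT : bellman P' R' γ VDT = VDT)
    (hVπreal : ∀ s, Vπreal s = R s (π s) + γ * ∑ t, P s (π s) t * Vπreal t)
    (hVπDT : ∀ s, VπDT s = R' s (π s) + γ * ∑ t, P' s (π s) t * VπDT t)
    (dbar : S → S → ℝ)
    (hdbar_mem : ∀ i j, dbar i j ∈ Set.Icc (0:ℝ) (Rmax / (1 - γ)))
    (hdbar_fix : Fop P P' R R' γ dbar = dbar) :
    ∀ i, |Vπreal i - VπDT i| ≤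
      dbar i i + γ * (⨆ k : S, (Vreal k - Vπreal k)) +
        γ * ⨆ k : S, (VDT k - VπDT k) := by
  obtain ⟨hγ0, hγ1⟩ := hγ
  have hdual := aux_value_le_dbar P P' R R' hγ0.le hγ1 hP hP' hVreal hVDT hdbar_fix
  have hle : ∀ s, Vπreal s ≤ Vreal s :=
    aux_policy_le_opt P R hγ0.le hγ1 hP π hVreal hVπreal
  have hle' : ∀ s, VπDT s ≤ VDT s :=
    aux_policy_le_opt P' R' hγ0.le hγ1 hP' π hVDT hVπDT
  intro i
  set g := ⨆ k : S, (Vreal k - Vπreal k) with hgdef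
  set g' := ⨆ k : S, (VDT k - VπDT k) with hg'def
  have hg : ∀ t, Vreal t - Vπreal t ≤ g :=
    fun t => le_ciSup (aux_bdd fun k => Vreal k - Vπreal k) t
  have hg' : ∀ t, VDT t - VπDT t ≤ g' :=
    fun t => le_ciSup (aux_bdd fun k => VDT k - VπDT k) t
  have b1 : |∑ t, P i (π i) t * Vπreal t - ∑ t, P i (π i) t * Vreal t| ≤ g := by
    rw [abs_sub_comm, ← Finset.sum_sub_distrib]
    simp only [← mul_sub]
    rw [abs_of_nonneg (Finset.sum_nonneg fun t _ =>
      mul_nonneg ((hP i (π i)).1 t) (sub_nonneg.2 (hle t)))]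
    exact aux_sum_mul_le (hP i (π i)) fun t => hg t
  have b3 : |∑ t, P' i (π i) t * VDT t - ∑ t, P' i (π i) t * VπDT t| ≤ g' := by
    rw [← Finset.sum_sub_distrib]
    simp only [← mul_sub]
    rw [abs_of_nonneg (Finset.sum_nonneg fun t _ =>
      mul_nonneg ((hP' i (π i)).1 t) (sub_nonneg.2 (hle' t)))]
    exact aux_sum_mul_le (hP' i (π i)) fun t => hg' t
  have b2 : |∑ t, P i (π i) t * Vreal t - ∑ t, P' i (π i) t * VDT t| ≤
      W1 (P i (π i)) (P' i (π i)) dbar := by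
    have := aux_diff_le_W1 (hP i (π i)) (hP' i (π i)) (M := 0)
      (f := Vreal) (g := VDT) (d := dbar) (fun a b => by simpa using hdual a b)
    simpa using this
  have bmid : |∑ t, P i (π i) t * Vπreal t - ∑ t, P' i (π i) t * VπDT t| ≤
      g + W1 (P i (π i)) (P' i (π i)) dbar + g' := by
    calc |∑ t, P i (π i) t * Vπreal t - ∑ t, P' i (π i) t * VπDT t|
        ≤ |∑ t, P i (π i) t * Vπreal t - ∑ t, P i (π i) t * Vreal t| +
          |∑ t, P i (π i) t * Vreal t - ∑ t, P' i (π i) t * VDT t| +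
          |∑ t, P' i (π i) t * VDT t - ∑ t, P' i (π i) t * VπDT t| := by
          have := abs_sub_le (∑ t, P i (π i) t * Vπreal t)
            (∑ t, P i (π i) t * Vreal t) (∑ t, P' i (π i) t * VπDT t)
          have h2 := abs_sub_le (∑ t, P i (π i) t * Vreal t)
            (∑ t, P' i (π i) t * VDT t) (∑ t, P' i (π i) t * VπDT t)
          linarith
      _ ≤ g + W1 (P i (π i)) (P' i (π i)) dbar + g' := by
          gcongr
  have hF : |R i (π i) - R' i (π i)| + γ * W1 (P i (π i)) (P' i (π i)) dbar ≤ dbar i i := by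
    conv_rhs => rw [← hdbar_fix]
    exact le_ciSup (aux_bdd fun a => |R i a - R' i a| + γ * W1 (P i a) (P' i a) dbar) (π i)
  have main : |Vπreal i - VπDT i| ≤ |R i (π i) - R' i (π i)| +
      γ * |∑ t, P i (π i) t * Vπreal t - ∑ t, P' i (π i) t * VπDT t| := by
    rw [hVπreal i, hVπDT i]
    have heq : (R i (π i) + γ * ∑ t, P i (π i) t * Vπreal t) -
        (R' i (π i) + γ * ∑ t, P' i (π i) t * VπDT t) =
        (R i (π i) - R' i (π i)) +
        γ * (∑ t, P i (π i) t * Vπreal t - ∑ t, P' i (π i) t * VπDT t) := by ring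
    rw [heq]
    refine (abs_add_le _ _).trans ?_
    rw [abs_mul, abs_of_nonneg hγ0.le]
  refine main.trans ?_
  have := mul_le_mul_of_nonneg_left bmid hγ0.le
  nlinarith [hF]
end
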